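/- arXiv:2304.02256 — 10 statements merged into one kernel-verified Lean document; each statement's English description precedes it below -/
import Mathlib

section
/- For x, y ≥ 1 and p ≥ 2, one has p·(x^p · log x + y^p · log y) < (x^p + y^p) · log(x^p + y^p). -/
theorem stmt_1 (x y p : ℝ) (hx : 1 ≤ x) (hy : 1 ≤ y) (hp : 2 ≤ p) :
    p * (x ^ p * Real.log x + y ^ p * Real.log y) <
      (x ^ p + y ^ p) * Real.log (x ^ p + y ^ p) := by
  have hx0 : (0:ℝ) < x := lt_of_lt_of_le one_pos hx
  have hy0 : (0:ℝ) < y := lt_of_lt_of_le one_pos hy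
  have ha : (1:ℝ) ≤ x ^ p := Real.one_le_rpow hx (by linarith)
  have hb : (1:ℝ) ≤ y ^ p := Real.one_le_rpow hy (by linarith)
  have hlogx : Real.log (x ^ p) = p * Real.log x := Real.log_rpow hx0 p
  have hlogy : Real.log (y ^ p) = p * Real.log y := Real.log_rpow hy0 p
  have h1 : x ^ p * Real.log (x ^ p) ≤ x ^ p * Real.log (x ^ p + y ^ p) := by
    apply mul_le_mul_of_nonneg_left _ (by linarith)
    exact Real.log_le_log (by linarith) (by linarith)
  have h2 : y ^ p * Real.log (y ^ p) < y ^ p * Real.log (x ^ p + y ^ p) := by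
    apply mul_lt_mul_of_pos_left _ (by linarith)
    exact Real.log_lt_log (by linarith) (by linarith)
  nlinarith [h1, h2, hlogx, hlogy]
end

section
/- For every integer n ≥ 10 and every real p ≥ 2, one has (1 + (n-3)^p)^(1/p) > (2^p + 3^p)^(1/p) + (2^p + 2^p)^(1/p). -/
lemma real_rpow_add_rpow_le {p q : ℝ} (a b : ℝ) (ha : 0 ≤ a) (hb : 0 ≤ b)
    (hp_pos : 0 < p) (hpq : p ≤ q) :
    (a ^ q + b ^ q) ^ (1 / q) ≤ (a ^ p + b ^ p) ^ (1 / p) := by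
  lift a to NNReal using ha
  lift b to NNReal using hb
  have := NNReal.rpow_add_rpow_le a b hp_pos hpq
  have := (NNReal.coe_le_coe).mpr this
  push_cast [NNReal.coe_rpow] at this ⊢
  exact this

theorem stmt_3 (n : ℕ) (hn : 10 ≤ n) (p : ℝ) (hp : 2 ≤ p) :
    (1 + ((n : ℝ) - 3) ^ p) ^ (1 / p) >
      ((2 : ℝ) ^ p + 3 ^ p) ^ (1 / p) + ((2 : ℝ) ^ p + 2 ^ p) ^ (1 / p) := by
  have hp0 : (0:ℝ) < p := by linarith
  have hn7 : (7:ℝ) ≤ (n:ℝ) - 3 := by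
    have : (10:ℝ) ≤ (n:ℝ) := by exact_mod_cast hn
    linarith
  -- RHS bounds
  have h1 : ((2:ℝ) ^ p + 3 ^ p) ^ (1 / p) ≤ ((2:ℝ) ^ (2:ℝ) + 3 ^ (2:ℝ)) ^ (1 / (2:ℝ)) :=
    real_rpow_add_rpow_le 2 3 (by norm_num) (by norm_num) (by norm_num) hp
  have h2 : ((2:ℝ) ^ p + 2 ^ p) ^ (1 / p) ≤ ((2:ℝ) ^ (2:ℝ) + 2 ^ (2:ℝ)) ^ (1 / (2:ℝ)) :=
    real_rpow_add_rpow_le 2 2 (by norm_num) (by norm_num) (by norm_num) hp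
  have e1 : ((2:ℝ) ^ (2:ℝ) + 3 ^ (2:ℝ)) = 13 := by
    rw [show (2:ℝ) = ((2:ℕ):ℝ) by norm_num, Real.rpow_natCast, Real.rpow_natCast]
    norm_num
  have e2 : ((2:ℝ) ^ (2:ℝ) + 2 ^ (2:ℝ)) = 8 := by
    rw [show (2:ℝ) = ((2:ℕ):ℝ) by norm_num, Real.rpow_natCast]
    norm_num
  rw [e1] at h1
  rw [e2] at h2
  set a := (13:ℝ) ^ (1 / (2:ℝ)) with ha
  set b := (8:ℝ) ^ (1 / (2:ℝ)) with hb
  have ha0 : 0 ≤ a := Real.rpow_nonneg (by norm_num) _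
  have hb0 : 0 ≤ b := Real.rpow_nonneg (by norm_num) _
  have ha2 : a ^ 2 = 13 := by
    rw [ha, ← Real.rpow_natCast ((13:ℝ) ^ (1 / (2:ℝ))) 2, ← Real.rpow_mul (by norm_num)]
    norm_num
  have hb2 : b ^ 2 = 8 := by
    rw [hb, ← Real.rpow_natCast ((8:ℝ) ^ (1 / (2:ℝ))) 2, ← Real.rpow_mul (by norm_num)]
    norm_num
  have hsum : a + b < 7 := by
    nlinarith [sq_nonneg (a - 361/100), sq_nonneg (b - 283/100)]
  -- LHS bound
  have hL : ((n:ℝ) - 3) < (1 + ((n : ℝ) - 3) ^ p) ^ (1 / p) := by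
    have h7 : (0:ℝ) ≤ (n:ℝ) - 3 := by linarith
    have hlt : ((n:ℝ) - 3) ^ p < 1 + ((n:ℝ) - 3) ^ p := by linarith
    have := Real.rpow_lt_rpow (Real.rpow_nonneg h7 p) hlt (by positivity : (0:ℝ) < 1/p)
    rwa [← Real.rpow_mul h7, mul_one_div, div_self hp0.ne', Real.rpow_one] at this
  linarith
end

section
/- For every integer n ≥ 10 and real p ≥ 2, one has 2·(2^p+3^p)^(1/p)·(1+3^p)^(1/p) + (1+(n-3)^p)^(1/p)·[(n-4)·(2^p+(n-3)^p)^(1/p) − (n-2)·(2^p+3^p)^(1/p)] > 0. -/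
theorem stmt_4 (n : ℕ) (hn : 10 ≤ n) (p : ℝ) (hp : 2 ≤ p) :
    2 * ((2 : ℝ) ^ p + 3 ^ p) ^ (1 / p) * ((1 : ℝ) + 3 ^ p) ^ (1 / p) +
      (1 + ((n : ℝ) - 3) ^ p) ^ (1 / p) *
        (((n : ℝ) - 4) * ((2 : ℝ) ^ p + ((n : ℝ) - 3) ^ p) ^ (1 / p) -
          ((n : ℝ) - 2) * ((2 : ℝ) ^ p + 3 ^ p) ^ (1 / p)) > 0 := by
  have hp0 : (0:ℝ) < p := by linarith
  have hm : (7:ℝ) ≤ (n : ℝ) - 3 := by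
    have : (10:ℝ) ≤ (n : ℝ) := by exact_mod_cast hn
    linarith
  set m : ℝ := (n : ℝ) - 3 with hmdef
  have hm0 : (0:ℝ) < m := by linarith
  -- positivity facts
  have h2p : (0:ℝ) < (2:ℝ)^p := Real.rpow_pos_of_pos (by norm_num) p
  have h3p : (0:ℝ) < (3:ℝ)^p := Real.rpow_pos_of_pos (by norm_num) p
  have hmp : (0:ℝ) < m^p := Real.rpow_pos_of_pos hm0 p
  have hA : (0:ℝ) < ((2:ℝ)^p + 3^p) ^ (1/p) :=
    Real.rpow_pos_of_pos (by linarith) _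
  have hB : (0:ℝ) < ((1:ℝ) + 3^p) ^ (1/p) :=
    Real.rpow_pos_of_pos (by linarith) _
  have hC : (0:ℝ) < ((1:ℝ) + m^p) ^ (1/p) :=
    Real.rpow_pos_of_pos (by linarith) _
  -- A ≤ 5
  have h25 : (2:ℝ)^p = (2/5)^p * 5^p := by
    rw [← Real.mul_rpow (by norm_num) (by norm_num)]; norm_num
  have h35 : (3:ℝ)^p = (3/5)^p * 5^p := by
    rw [← Real.mul_rpow (by norm_num) (by norm_num)]; norm_num
  have h5p : (0:ℝ) < (5:ℝ)^p := Real.rpow_pos_of_pos (by norm_num) p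
  have e2 : ((2:ℝ)/5)^p ≤ (2/5)^(1:ℝ) :=
    Real.rpow_le_rpow_of_exponent_ge (by norm_num) (by norm_num) (by linarith)
  have e3 : ((3:ℝ)/5)^p ≤ (3/5)^(1:ℝ) :=
    Real.rpow_le_rpow_of_exponent_ge (by norm_num) (by norm_num) (by linarith)
  rw [Real.rpow_one] at e2 e3
  have hsum : (2:ℝ)^p + 3^p ≤ 5^p := by
    rw [h25, h35]
    nlinarith
  have hA5 : ((2:ℝ)^p + 3^p) ^ (1/p) ≤ 5 := by
    calc ((2:ℝ)^p + 3^p) ^ (1/p) ≤ ((5:ℝ)^p) ^ (1/p) :=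
          Real.rpow_le_rpow (by positivity) hsum (by positivity)
      _ = 5 := by
          rw [← Real.rpow_mul (by norm_num : (0:ℝ) ≤ 5), mul_one_div,
            div_self (ne_of_gt hp0), Real.rpow_one]
  -- (2^p + m^p)^(1/p) ≥ m
  have hD : m ≤ ((2:ℝ)^p + m^p) ^ (1/p) := by
    calc m = (m^p) ^ (1/p) := by
          rw [← Real.rpow_mul (le_of_lt hm0), mul_one_div, div_self (ne_of_gt hp0),
            Real.rpow_one]
      _ ≤ ((2:ℝ)^p + m^p) ^ (1/p) :=
          Real.rpow_le_rpow (le_of_lt hmp) (by linarith) (by positivity)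
  -- bracket nonneg
  have hbr : (0:ℝ) ≤ (m - 1) * ((2:ℝ)^p + m^p) ^ (1/p) - (m + 1) * ((2:ℝ)^p + 3^p)^(1/p) := by
    have h1 : (m + 1) * ((2:ℝ)^p + 3^p)^(1/p) ≤ (m + 1) * 5 := by nlinarith
    have h2 : (m - 1) * m ≤ (m - 1) * ((2:ℝ)^p + m^p) ^ (1/p) := by nlinarith
    nlinarith
  have hn3 : ((n:ℝ) - 4) = m - 1 := by rw [hmdef]; ring
  have hn2 : ((n:ℝ) - 2) = m + 1 := by rw [hmdef]; ring
  rw [hn3, hn2]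
  nlinarith [mul_nonneg (le_of_lt hC) hbr, mul_pos (mul_pos (by norm_num : (0:ℝ) < 2) hA) hB]
end

section
/- For all real x ≥ 17 and all real y ≥ 2, one has 1 + (x−2)^y > 4^y + (x−3)^y. -/
/-! With `a = x - 3 ≥ 14`, Bernoulli's inequality gives `(a + 1) ^ y ≥ a ^ y + y a ^ (y - 1)`,
and the increment `y a ^ (y - 1) ≥ 2 a ^ (y - 1) ≥ 28 a ^ (y - 2)` already beats
`4 ^ y = 16 · 4 ^ (y - 2) ≤ 16 a ^ (y - 2)`. -/

open Real

theorem rpow_add_mul_rpow_sub_one_le_add_one_rpow {a y : ℝ} (ha : 0 < a) (hy : 1 ≤ y) :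
    a ^ y + y * a ^ (y - 1) ≤ (a + 1) ^ y := by
  have hbernoulli : 1 + y * a⁻¹ ≤ (1 + a⁻¹) ^ y :=
    one_add_mul_self_le_rpow_one_add (by linarith [inv_pos.2 ha]) hy
  calc a ^ y + y * a ^ (y - 1) = a ^ y * (1 + y * a⁻¹) := by
        rw [rpow_sub_one ha.ne']; field_simp
    _ ≤ a ^ y * (1 + a⁻¹) ^ y := by gcongr
    _ = (a + 1) ^ y := by
        rw [← mul_rpow ha.le (by positivity)]; field_simp

theorem rpow_lt_mul_rpow_sub_one {a b y : ℝ} (hb : 0 ≤ b) (hba : b ≤ a) (hb2 : b ^ 2 < 2 * a)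
    (hy : 2 ≤ y) : b ^ y < y * a ^ (y - 1) := by
  have ha : 0 < a := by nlinarith
  calc b ^ y = b ^ 2 * b ^ (y - 2) := by
        rw [← rpow_natCast, ← rpow_add' hb (by push_cast; linarith)]; norm_num
    _ ≤ b ^ 2 * a ^ (y - 2) := by gcongr
    _ < 2 * a * a ^ (y - 2) := by gcongr
    _ = 2 * a ^ (y - 1) := by
        rw [mul_assoc, ← rpow_one_add' ha.le (by linarith)]; ring_nf
    _ ≤ y * a ^ (y - 1) := by gcongr

theorem stmt_5 (x y : ℝ) (hx : 17 ≤ x) (hy : 2 ≤ y) :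
    1 + (x - 2) ^ y > (4 : ℝ) ^ y + (x - 3) ^ y := by
  have hbernoulli := rpow_add_mul_rpow_sub_one_le_add_one_rpow (a := x - 3) (by linarith)
    (by linarith : (1 : ℝ) ≤ y)
  have hfour := rpow_lt_mul_rpow_sub_one (by norm_num : (0 : ℝ) ≤ 4) (by linarith)
    (by linarith : (4 : ℝ) ^ 2 < 2 * (x - 3)) hy
  rw [show x - 3 + 1 = x - 2 by ring] at hbernoulli
  linarith
end

section
/- For all real y ≥ 2, one has 15^y · log 15 − 4^y · log 4 − 14^y · log 14 > 0. -/
theorem stmt_6 (y : ℝ) (hy : 2 ≤ y) :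
    (15 : ℝ) ^ y * Real.log 15 - (4 : ℝ) ^ y * Real.log 4 - (14 : ℝ) ^ y * Real.log 14 > 0 := by
  have h15 : (0:ℝ) < (15:ℝ) ^ y := Real.rpow_pos_of_pos (by norm_num) y
  have h14 : ((14:ℝ)) ^ y = ((14/15 : ℝ)) ^ y * (15:ℝ) ^ y := by
    rw [← Real.mul_rpow (by norm_num) (by norm_num)]; norm_num
  have h4 : ((4:ℝ)) ^ y = ((4/15 : ℝ)) ^ y * (15:ℝ) ^ y := by
    rw [← Real.mul_rpow (by norm_num) (by norm_num)]; norm_num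
  have hb14 : ((14/15 : ℝ)) ^ y ≤ ((14/15 : ℝ)) ^ (2:ℝ) :=
    Real.rpow_le_rpow_of_exponent_ge (by norm_num) (by norm_num) hy
  have hb4 : ((4/15 : ℝ)) ^ y ≤ ((4/15 : ℝ)) ^ (2:ℝ) :=
    Real.rpow_le_rpow_of_exponent_ge (by norm_num) (by norm_num) hy
  have e14 : ((14/15 : ℝ)) ^ (2:ℝ) = 196/225 := by
    rw [show (2:ℝ) = ((2:ℕ):ℝ) by norm_num, Real.rpow_natCast]; norm_num
  have e4 : ((4/15 : ℝ)) ^ (2:ℝ) = 16/225 := by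
    rw [show (2:ℝ) = ((2:ℕ):ℝ) by norm_num, Real.rpow_natCast]; norm_num
  have hp14 : ((14/15 : ℝ)) ^ y > 0 := Real.rpow_pos_of_pos (by norm_num) y
  have hp4 : ((4/15 : ℝ)) ^ y > 0 := Real.rpow_pos_of_pos (by norm_num) y
  have hlog4 : (0:ℝ) < Real.log 4 := Real.log_pos (by norm_num)
  have hlog14 : (0:ℝ) < Real.log 14 := Real.log_pos (by norm_num)
  have hl1 : Real.log 4 ≤ Real.log 14 := Real.log_le_log (by norm_num) (by norm_num)
  have hl2 : Real.log 14 ≤ Real.log 15 := Real.log_le_log (by norm_num) (by norm_num)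
  rw [h14, h4, e14] at *
  rw [e4] at hb4
  nlinarith [mul_le_mul_of_nonneg_right hb14 (le_of_lt h15),
    mul_le_mul_of_nonneg_right hb4 (le_of_lt h15),
    mul_pos h15 hlog14, mul_pos h15 hlog4]
end

section
/- For every integer n ≥ 17 and every real p ≥ 2, one has 2·(2^p+(n−2)^p)^(2/p) + (n−4)·(1+(n−2)^p)^(2/p) > (n−2)·(4^p+(n−3)^p)^(2/p). -/
/-!
Put `a = n - 2`. For `p ≥ 2` the `ℓ^p` norm of a plane vector is at most its `ℓ²` norm, so
`(4^p + (a-1)^p)^(2/p) ≤ 16 + (a-1)^2 ≤ a^2` once `2a ≥ 17`, and the right side is at most `a^3`.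
On the left, each `(x^p + a^p)^(2/p)` with `x > 0` exceeds `a^2`, so the left side exceeds
`2a^2 + (a-2)a^2 = a^3`.
-/

namespace Real

lemma rpow_add_rpow_rpow_two_div_le {x y p : ℝ} (hx : 0 ≤ x) (hy : 0 ≤ y) (hp : 2 ≤ p) :
    (x ^ p + y ^ p) ^ (2 / p) ≤ x ^ 2 + y ^ 2 := by
  have hs : 0 ≤ x ^ p + y ^ p := by positivity
  have hnorm : (x ^ p + y ^ p) ^ (1 / p) ≤ (x ^ (2 : ℝ) + y ^ (2 : ℝ)) ^ (1 / (2 : ℝ)) :=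
    rpow_add_rpow_le hx hy two_pos hp
  calc (x ^ p + y ^ p) ^ (2 / p) = ((x ^ p + y ^ p) ^ (1 / p)) ^ (2 : ℝ) := by
        rw [← rpow_mul hs]; ring_nf
    _ ≤ ((x ^ (2 : ℝ) + y ^ (2 : ℝ)) ^ (1 / (2 : ℝ))) ^ (2 : ℝ) :=
        rpow_le_rpow (by positivity) hnorm zero_le_two
    _ = x ^ 2 + y ^ 2 := by
        rw [← rpow_mul (by positivity)]
        norm_num

lemma sq_lt_rpow_add_rpow_rpow_two_div {x y p : ℝ} (hx : 0 < x) (hy : 0 ≤ y) (hp : 0 < p) :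
    y ^ 2 < (x ^ p + y ^ p) ^ (2 / p) := by
  have hyp : (y ^ p) ^ (2 / p) = y ^ 2 := by
    rw [← rpow_mul hy, mul_div_cancel₀ _ hp.ne', rpow_two]
  rw [← hyp]
  exact rpow_lt_rpow (by positivity) (lt_add_of_pos_left _ (by positivity)) (by positivity)

end Real

theorem stmt_7 (n : ℕ) (hn : 17 ≤ n) (p : ℝ) (hp : 2 ≤ p) :
    2 * ((2 : ℝ) ^ p + ((n : ℝ) - 2) ^ p) ^ (2 / p) +
      ((n : ℝ) - 4) * ((1 : ℝ) + ((n : ℝ) - 2) ^ p) ^ (2 / p) >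
      ((n : ℝ) - 2) * ((4 : ℝ) ^ p + ((n : ℝ) - 3) ^ p) ^ (2 / p) := by
  have hn' : (17 : ℝ) ≤ n := by exact_mod_cast hn
  have hp0 : 0 < p := by linarith
  have ha : (0 : ℝ) ≤ (n : ℝ) - 2 := by linarith
  have hrhs : ((4 : ℝ) ^ p + ((n : ℝ) - 3) ^ p) ^ (2 / p) ≤ ((n : ℝ) - 2) ^ 2 :=
    calc ((4 : ℝ) ^ p + ((n : ℝ) - 3) ^ p) ^ (2 / p) ≤ 4 ^ 2 + ((n : ℝ) - 3) ^ 2 :=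
          Real.rpow_add_rpow_rpow_two_div_le (by norm_num) (by linarith) hp
      _ ≤ ((n : ℝ) - 2) ^ 2 := by nlinarith
  have h2 := Real.sq_lt_rpow_add_rpow_rpow_two_div (x := 2) two_pos ha hp0
  have h1 := Real.sq_lt_rpow_add_rpow_rpow_two_div (x := 1) one_pos ha hp0
  rw [Real.one_rpow] at h1
  calc ((n : ℝ) - 2) * ((4 : ℝ) ^ p + ((n : ℝ) - 3) ^ p) ^ (2 / p)
      ≤ ((n : ℝ) - 2) * ((n : ℝ) - 2) ^ 2 := mul_le_mul_of_nonneg_left hrhs ha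
    _ = 2 * ((n : ℝ) - 2) ^ 2 + ((n : ℝ) - 4) * ((n : ℝ) - 2) ^ 2 := by ring
    _ < 2 * ((2 : ℝ) ^ p + ((n : ℝ) - 2) ^ p) ^ (2 / p) +
          ((n : ℝ) - 4) * ((1 : ℝ) + ((n : ℝ) - 2) ^ p) ^ (2 / p) := by
        gcongr
        linarith
end

section
/- For every integer n ≥ 10 and real p ≥ 2: f(2,4,p) − f(2,3,p) + f(2,n−2,p) − f(2,3,p) + f(1,4,p) − f(1,n−2,p) > 0, where f(x,y,p) = (x^p+y^p)^(1/p). -/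
theorem stmt_8 (n : ℕ) (hn : 10 ≤ n) (p : ℝ) (hp : 2 ≤ p) :
    ((2 : ℝ) ^ p + 4 ^ p) ^ (1 / p) - ((2 : ℝ) ^ p + 3 ^ p) ^ (1 / p) +
      ((2 : ℝ) ^ p + ((n : ℝ) - 2) ^ p) ^ (1 / p) - ((2 : ℝ) ^ p + 3 ^ p) ^ (1 / p) +
      ((1 : ℝ) + 4 ^ p) ^ (1 / p) - (1 + ((n : ℝ) - 2) ^ p) ^ (1 / p) > 0 := by
  have hp0 : (0 : ℝ) < p := by linarith
  have h1p : (0 : ℝ) < 1 / p := by positivity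
  set m : ℝ := (n : ℝ) - 2 with hm
  have hm8 : (8 : ℝ) ≤ m := by
    have : (10 : ℝ) ≤ (n : ℝ) := by exact_mod_cast hn
    simp [hm]; linarith
  have hmpos : (0 : ℝ) < m := by linarith
  have h2p : (0 : ℝ) < (2 : ℝ) ^ p := Real.rpow_pos_of_pos (by norm_num) p
  have h3p : (0 : ℝ) < (3 : ℝ) ^ p := Real.rpow_pos_of_pos (by norm_num) p
  have h4p : (0 : ℝ) < (4 : ℝ) ^ p := Real.rpow_pos_of_pos (by norm_num) p
  have hmp : (0 : ℝ) < m ^ p := Real.rpow_pos_of_pos hmpos p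
  -- Term A: strict
  have hA : ((2:ℝ)^p + 3^p) ^ (1/p) < ((2:ℝ)^p + 4^p) ^ (1/p) := by
    apply Real.rpow_lt_rpow (by positivity) _ h1p
    have : (3:ℝ)^p < (4:ℝ)^p := Real.rpow_lt_rpow (by norm_num) (by norm_num) hp0
    linarith
  -- Term B
  have hB : ((1:ℝ) + m^p) ^ (1/p) ≤ ((2:ℝ)^p + m^p) ^ (1/p) := by
    apply Real.rpow_le_rpow (by positivity) _ (le_of_lt h1p)
    have h1 : (1:ℝ) ≤ (2:ℝ)^p := by
      have := Real.one_rpow p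
      calc (1:ℝ) = (1:ℝ)^p := (Real.one_rpow p).symm
        _ ≤ (2:ℝ)^p := Real.rpow_le_rpow (by norm_num) (by norm_num) hp0.le
    linarith
  -- Term C: 2^p + 3^p ≤ 1 + 4^p
  have hC : ((2:ℝ)^p + 3^p) ^ (1/p) ≤ ((1:ℝ) + 4^p) ^ (1/p) := by
    apply Real.rpow_le_rpow (by positivity) _ (le_of_lt h1p)
    have h24 : (2:ℝ)^p * (2:ℝ)^p = (4:ℝ)^p := by
      rw [← Real.mul_rpow (by norm_num) (by norm_num)]; norm_num
    have h2ge : (4:ℝ) ≤ (2:ℝ)^p := by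
      calc (4:ℝ) = (2:ℝ)^(2:ℝ) := by
            rw [show ((2:ℝ):ℝ) = ((2:ℕ):ℝ) by norm_num, Real.rpow_natCast]; norm_num
        _ ≤ (2:ℝ)^p := Real.rpow_le_rpow_of_exponent_le (by norm_num) hp
    have h2small : (2:ℝ)^p ≤ (1/4) * (4:ℝ)^p := by nlinarith
    have h34 : ((3/4:ℝ))^p * (4:ℝ)^p = (3:ℝ)^p := by
      rw [← Real.mul_rpow (by norm_num) (by norm_num)]; norm_num
    have h3small : (3:ℝ)^p ≤ (9/16) * (4:ℝ)^p := by
      have hle : ((3/4:ℝ))^p ≤ ((3/4:ℝ))^(2:ℝ) :=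
        Real.rpow_le_rpow_of_exponent_ge (by norm_num) (by norm_num) hp
      have h342 : ((3/4:ℝ))^(2:ℝ) = 9/16 := by
        rw [show ((2:ℝ):ℝ) = ((2:ℕ):ℝ) by norm_num, Real.rpow_natCast]; norm_num
      nlinarith
    linarith
  linarith
end

section
/- If x₁, y₁, x₂, y₂ ≥ 1 with x₁ + y₁ = x₂ + y₂ and |x₁ − y₁| > |x₂ − y₂|, then for every p ≥ 2, (x₁^p + y₁^p)^(1/p) ≥ (x₂^p + y₂^p)^(1/p). -/
/-!
Equal sums and a smaller gap mean that `(x₂, y₂)` is majorized by `(x₁, y₁)`: both `x₂` and `y₂`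
lie between `x₁` and `y₁`. For the convex function `t ↦ t ^ p` on `[0, ∞)` this gives
`x₂ ^ p + y₂ ^ p ≤ x₁ ^ p + y₁ ^ p` (two-point Karamata), and `t ↦ t ^ (1 / p)` is monotone.
-/

open Set

theorem mem_uIcc_of_add_eq_of_abs_sub_le {a b x y : ℝ} (hsum : x + y = a + b)
    (habs : |x - y| ≤ |a - b|) : x ∈ uIcc a b := by
  rw [mem_uIcc]
  rcases le_total a b with hab | hab
  · rw [abs_of_nonpos (sub_nonpos.2 hab), abs_le] at habs
    exact Or.inl ⟨by linarith [habs.1], by linarith [habs.2]⟩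
  · rw [abs_of_nonneg (sub_nonneg.2 hab), abs_le] at habs
    exact Or.inr ⟨by linarith [habs.1], by linarith [habs.2]⟩

theorem ConvexOn.map_add_map_le_of_mem_Icc {s : Set ℝ} {f : ℝ → ℝ} (hf : ConvexOn ℝ s f)
    {a b x y : ℝ} (ha : a ∈ s) (hb : b ∈ s) (hx : x ∈ Icc a b) (hsum : x + y = a + b) :
    f x + f y ≤ f a + f b := by
  rcases hx.1.eq_or_lt' with rfl | hax
  · rw [show y = b by linarith]
  -- `x` and `y` are the convex combinations of `a` and `b` with swapped weights `t` and `1 - t`.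
  set t := (b - x) / (b - a) with ht
  have hba : 0 < b - a := by linarith [hx.2]
  have ht₀ : 0 ≤ t := div_nonneg (by linarith [hx.2]) hba.le
  have ht₁ : 0 ≤ 1 - t := by rw [sub_nonneg, ht, div_le_one hba]; linarith
  have hcancel : t * (b - a) = b - x := div_mul_cancel₀ _ hba.ne'
  have hfx := hf.2 ha hb ht₀ ht₁ (by ring)
  have hfy := hf.2 ha hb ht₁ ht₀ (by ring)
  simp only [smul_eq_mul] at hfx hfy
  rw [show t * a + (1 - t) * b = x by linear_combination -hcancel] at hfx
  rw [show (1 - t) * a + t * b = y by linear_combination hcancel - hsum] at hfy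
  linarith

theorem ConvexOn.map_add_map_le_of_mem_uIcc {s : Set ℝ} {f : ℝ → ℝ} (hf : ConvexOn ℝ s f)
    {a b x y : ℝ} (ha : a ∈ s) (hb : b ∈ s) (hx : x ∈ uIcc a b) (hsum : x + y = a + b) :
    f x + f y ≤ f a + f b := by
  rcases le_total a b with hab | hab
  · rw [uIcc_of_le hab] at hx
    exact hf.map_add_map_le_of_mem_Icc ha hb hx hsum
  · rw [uIcc_of_ge hab] at hx
    rw [add_comm (f a)]
    exact hf.map_add_map_le_of_mem_Icc hb ha hx (by linarith)

theorem stmt_12_general (x₁ y₁ x₂ y₂ : ℝ) (hx₁ : 1 ≤ x₁) (hy₁ : 1 ≤ y₁)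
    (hsum : x₁ + y₁ = x₂ + y₂) (habs : |x₁ - y₁| > |x₂ - y₂|)
    (p : ℝ) (hp : 2 ≤ p) :
    (x₁ ^ p + y₁ ^ p) ^ (1 / p) ≥ (x₂ ^ p + y₂ ^ p) ^ (1 / p) := by
  have hx₁₀ : x₁ ∈ Ici (0 : ℝ) := mem_Ici.2 (by linarith)
  have hy₁₀ : y₁ ∈ Ici (0 : ℝ) := mem_Ici.2 (by linarith)
  have hx₂ : x₂ ∈ uIcc x₁ y₁ := mem_uIcc_of_add_eq_of_abs_sub_le hsum.symm habs.le
  have hy₂ : y₂ ∈ uIcc x₁ y₁ :=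
    mem_uIcc_of_add_eq_of_abs_sub_le (y := x₂) (by linarith) (by rw [abs_sub_comm]; exact habs.le)
  have hx₂₀ : 0 ≤ x₂ := ordConnected_Ici.uIcc_subset hx₁₀ hy₁₀ hx₂
  have hy₂₀ : 0 ≤ y₂ := ordConnected_Ici.uIcc_subset hx₁₀ hy₁₀ hy₂
  have hpow : x₂ ^ p + y₂ ^ p ≤ x₁ ^ p + y₁ ^ p :=
    (convexOn_rpow (by linarith)).map_add_map_le_of_mem_uIcc hx₁₀ hy₁₀ hx₂ hsum.symm
  exact Real.rpow_le_rpow (by positivity) hpow (one_div_nonneg.2 (by linarith))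

theorem stmt_12 (x₁ y₁ x₂ y₂ : ℝ) (hx₁ : 1 ≤ x₁) (hy₁ : 1 ≤ y₁) (hx₂ : 1 ≤ x₂)
    (hy₂ : 1 ≤ y₂) (hsum : x₁ + y₁ = x₂ + y₂) (habs : |x₁ - y₁| > |x₂ - y₂|)
    (p : ℝ) (hp : 2 ≤ p) :
    (x₁ ^ p + y₁ ^ p) ^ (1 / p) ≥ (x₂ ^ p + y₂ ^ p) ^ (1 / p) :=
  stmt_12_general x₁ y₁ x₂ y₂ hx₁ hy₁ hsum habs p hp
end

section
/- The largest root of the polynomial x⁴ − (n+1)x² − 4x + 3n − 13 is strictly less than √n for every integer n ≥ 18. -/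
theorem stmt_15 (n : ℕ) (hn : 18 ≤ n) (x : ℝ)
    (hx : x ^ 4 - ((n : ℝ) + 1) * x ^ 2 - 4 * x + (3 * (n : ℝ) - 13) = 0) :
    x < Real.sqrt n := by
  by_contra h
  push_neg at h
  have h0 : (0:ℝ) ≤ x := le_trans (Real.sqrt_nonneg _) h
  have hsq : Real.sqrt n ^ 2 = (n : ℝ) := Real.sq_sqrt (Nat.cast_nonneg n)
  have h2 : (n : ℝ) ≤ x ^ 2 := by nlinarith [Real.sqrt_nonneg (n:ℝ)]
  have hn' : (18 : ℝ) ≤ (n : ℝ) := by exact_mod_cast hn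
  nlinarith [mul_nonneg (sub_nonneg.mpr h2) (sub_nonneg.mpr h2), sq_nonneg (x - 2),
    mul_nonneg (sub_nonneg.mpr hn') (sub_nonneg.mpr h2)]
end

section
/- For every integer n ≥ 18 and real p ≥ 2, with f(x,y,p) = (x^p+y^p)^(1/p), one has √n · f(4,n−2,p) · (n·f(4,n−2,p)² − 4·f(2,n−1,p)² − (n−5)·f(1,n−1,p)²) + f(2,2,p) · ((n−5)·f(1,n−1,p)² − n·f(4,n−2,p)²) < 0. -/
/-! With A = f(4,n-2,p), B = f(2,n-1,p), C = f(1,n-1,p), D = f(2,2,p), the expression equals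
(√n A - D)(nA² - (n-5)C²) - 4√n A B². Bounding every f(x,y,p) between y and √(x² + y²) gives
0 ≤ D ≤ 2√2 < √n A and nA² - (n-5)C² ≤ 3n² + 9n + 5 < 4(n-1)² ≤ 4B² once n ≥ 18. -/

noncomputable def pNorm (p x y : ℝ) : ℝ := (x ^ p + y ^ p) ^ (1 / p)

section pNorm

variable {p x y : ℝ}

lemma pNorm_nonneg (hx : 0 ≤ x) (hy : 0 ≤ y) : 0 ≤ pNorm p x y := by
  unfold pNorm; positivity

lemma le_pNorm_right (hp : 0 < p) (hx : 0 ≤ x) (hy : 0 ≤ y) : y ≤ pNorm p x y :=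
  calc y = (y ^ p) ^ (1 / p) := by
        rw [← Real.rpow_mul hy, mul_one_div_cancel hp.ne', Real.rpow_one]
    _ ≤ pNorm p x y := by
      unfold pNorm
      gcongr
      exact le_add_of_nonneg_left (by positivity)

lemma pNorm_sq_le (hp : 2 ≤ p) (hx : 0 ≤ x) (hy : 0 ≤ y) : pNorm p x y ^ 2 ≤ x ^ 2 + y ^ 2 := by
  have hp2 : pNorm p x y ≤ pNorm 2 x y := Real.rpow_add_rpow_le hx hy two_pos hp
  have hsqrt : pNorm 2 x y = √(x ^ 2 + y ^ 2) := by
    simp only [pNorm, Real.rpow_two, Real.sqrt_eq_rpow, one_div]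
  rw [hsqrt] at hp2
  calc pNorm p x y ^ 2 ≤ √(x ^ 2 + y ^ 2) ^ 2 := by gcongr; exact pNorm_nonneg hx hy
    _ = x ^ 2 + y ^ 2 := Real.sq_sqrt (by positivity)

end pNorm

lemma lemma52_of_bounds {n s A B C D : ℝ} (hn : 18 ≤ n) (hs : 4 ≤ s) (hA : n - 2 ≤ A)
    (hA2 : A ^ 2 ≤ 16 + (n - 2) ^ 2) (hB : n - 1 ≤ B) (hC : n - 1 ≤ C) (hD : 0 ≤ D)
    (hD2 : D ^ 2 ≤ 8) :
    s * A * (n * A ^ 2 - 4 * B ^ 2 - (n - 5) * C ^ 2) + D * ((n - 5) * C ^ 2 - n * A ^ 2) < 0 := by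
  have hX : n * A ^ 2 - (n - 5) * C ^ 2 ≤ 3 * n ^ 2 + 9 * n + 5 := by
    have hC2 : (n - 1) ^ 2 ≤ C ^ 2 := by gcongr; linarith
    calc n * A ^ 2 - (n - 5) * C ^ 2
        ≤ n * (16 + (n - 2) ^ 2) - (n - 5) * (n - 1) ^ 2 := by
          gcongr; linarith
      _ = 3 * n ^ 2 + 9 * n + 5 := by ring
  have hB2 : 3 * n ^ 2 + 9 * n + 5 < 4 * B ^ 2 := by
    have : (n - 1) ^ 2 ≤ B ^ 2 := by gcongr; linarith
    nlinarith
  have hsA : 0 < s * A := by apply mul_pos <;> linarith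
  have hD3 : D ≤ 3 := by nlinarith
  have hDsA : D ≤ s * A := by nlinarith
  set X := n * A ^ 2 - (n - 5) * C ^ 2
  have hlt : (s * A - D) * X < s * A * (4 * B ^ 2) := by
    rcases le_or_gt X 0 with hX0 | hX0
    · nlinarith
    · calc (s * A - D) * X ≤ s * A * X := by gcongr; linarith
        _ < s * A * (4 * B ^ 2) := by gcongr; linarith
  linear_combination hlt

theorem stmt_16 (n : ℕ) (hn : 18 ≤ n) (p : ℝ) (hp : 2 ≤ p) :
    Real.sqrt n * ((4 : ℝ) ^ p + ((n : ℝ) - 2) ^ p) ^ (1 / p) *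
        ((n : ℝ) * (((4 : ℝ) ^ p + ((n : ℝ) - 2) ^ p) ^ (1 / p)) ^ 2 -
          4 * (((2 : ℝ) ^ p + ((n : ℝ) - 1) ^ p) ^ (1 / p)) ^ 2 -
          ((n : ℝ) - 5) * (((1 : ℝ) + ((n : ℝ) - 1) ^ p) ^ (1 / p)) ^ 2) +
      ((2 : ℝ) ^ p + 2 ^ p) ^ (1 / p) *
        (((n : ℝ) - 5) * (((1 : ℝ) + ((n : ℝ) - 1) ^ p) ^ (1 / p)) ^ 2 -
          (n : ℝ) * (((4 : ℝ) ^ p + ((n : ℝ) - 2) ^ p) ^ (1 / p)) ^ 2) < 0 := by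
  have hn : (18 : ℝ) ≤ n := by exact_mod_cast hn
  have hp0 : 0 < p := by linarith
  have hsqrt : 4 ≤ √(n : ℝ) := Real.le_sqrt_of_sq_le (by linarith)
  have hA2 := pNorm_sq_le hp (by norm_num : (0 : ℝ) ≤ 4) (by linarith : (0 : ℝ) ≤ n - 2)
  have hD2 := pNorm_sq_le hp (by norm_num : (0 : ℝ) ≤ 2) (by norm_num : (0 : ℝ) ≤ 2)
  norm_num at hA2 hD2
  have h := lemma52_of_bounds hn hsqrt (le_pNorm_right hp0 (by norm_num) (by linarith)) hA2
    (le_pNorm_right hp0 (by norm_num : (0 : ℝ) ≤ 2) (by linarith))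
    (le_pNorm_right hp0 (by norm_num : (0 : ℝ) ≤ 1) (by linarith))
    (pNorm_nonneg (by norm_num) (by norm_num)) hD2
  simpa only [pNorm, Real.one_rpow] using h
end
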